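/- arXiv:math/0603542 — 3 statements merged into one kernel-verified Lean document; each statement's English description precedes it below -/
import Mathlib

section
/- The Euler adic transformation T : X \ X_max → X \ X_min is a bijection, and the symmetric measure η is T-invariant: for every Borel set B ⊆ X, η({x ∈ X \ X_max : T(x) ∈ B}) = η(B). -/
open MeasureTheory Filter
open scoped ENNReal

/-- The Euler path space: a point is an infinite edge path in the Euler graph,
`x n : Fin (n+2)` being the label of the edge chosen from level `n` to level `n+1`. -/
abbrev EulerPath : Type := ∀ n : ℕ, Fin (n + 2)

/-- Vertex labels: `kv x n` is the `k` with the path `x` passing through vertex `(n,k)`.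
A label `(x n : ℕ) ≤ kv x n` is a left turn (edge to `(n+1, kv x n)`), a larger label
is a right turn (edge to `(n+1, kv x n + 1)`). -/
def kv (x : EulerPath) : ℕ → ℕ
  | 0 => 0
  | n + 1 => if (x n : ℕ) ≤ kv x n then kv x n else kv x n + 1

/-- The symmetric measure: the product over `n` of the uniform probability measures on
`Fin (n+2)`, characterized as the probability measure giving each cylinder of length `n`
the measure `∏_{i<n} 1/(i+2)`. -/
def IsSymmetricMeasure (η : Measure EulerPath) : Prop :=
  IsProbabilityMeasure η ∧
    ∀ (n : ℕ) (c : EulerPath),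
      η {x | ∀ i < n, x i = c i} = ∏ i ∈ Finset.range n, ((i : ℝ≥0∞) + 2)⁻¹

/-- The strict partial order on paths: `x` is less than `y` if they eventually agree,
pass through the same vertex just after the last disagreement, and at the last
disagreement the edge of `x` strictly precedes the edge of `y` in the order on edges
into that common vertex: the right edges (those from the source with the smaller
vertex label) come before the left edges, and edges with the same source are ordered
by their outgoing labels. -/
def pathLT (x y : EulerPath) : Prop :=
  ∃ N, (∀ n, N < n → x n = y n) ∧ kv x (N + 1) = kv y (N + 1) ∧
    (kv x N < kv y N ∨ (kv x N = kv y N ∧ (x N : ℕ) < (y N : ℕ)))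

/-- The set of maximal paths. -/
def Xmax : Set EulerPath := {x | ¬ ∃ y, pathLT x y}

/-- The set of minimal paths. -/
def Xmin : Set EulerPath := {x | ¬ ∃ y, pathLT y x}

/-- `x j` is the largest edge into the vertex `(j+1, kv x (j+1))`: either it is the left
edge with the largest label, or it is the unique edge into the vertex `(j+1, j+1)`. -/
def IsMaxEdge (x : EulerPath) (j : ℕ) : Prop :=
  (x j : ℕ) = kv x j ∨ kv x (j + 1) = j + 1

instance (x : EulerPath) (j : ℕ) : Decidable (IsMaxEdge x j) := by
  unfold IsMaxEdge; infer_instance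

open scoped Classical

/-- The Euler adic transformation: if `j` is the least index such that `x j` is not the
largest edge into `(j+1, kv x (j+1))`, then `T x` agrees with `x` in coordinates `> j`,
has as `j`-th edge the next larger edge into `(j+1, kv x (j+1))` (the next right edge if
`x j` is a right edge that is not the last one, the first left edge if `x j` is the last
right edge, and the next left edge if `x j` is a left edge), and its first `j` edges
form the minimal path from the root `(0,0)` to the source vertex `(j, k')` of that edge
(which goes through `(i, max (k' - (j - i)) 0)` at each level `i ≤ j`, always using the
minimal edge). On paths all of whose edges are maximal, `T` is defined as the identity. -/
noncomputable def eulerAdic (x : EulerPath) : EulerPath :=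
  if h : ∃ j, ¬ IsMaxEdge x j then
    let j := Nat.find h
    -- the source vertex `(j, k')` of the next larger edge into `(j+1, kv x (j+1))`
    let k' := if (x j : ℕ) = j + 1 then kv x (j + 1) else kv x j
    fun n =>
      if j < n then x n
      else if hn : n = j then
        -- the next larger edge into `(j+1, kv x (j+1))`
        ⟨if (x j : ℕ) = j + 1 then 0 else (x j : ℕ) + 1, by
          have h2 := (x j).isLt
          split_ifs with h' <;> omega⟩
      else
        -- the minimal path from the root `(0,0)` to the vertex `(j, k')`
        ⟨(if n + 1 ≤ j - k' then 0 else k' + n + 1 - j) % (n + 2),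
          Nat.mod_lt _ (by omega)⟩
  else x

/-!
On the paths whose first non-maximal edge lies below level `m`, the adic transformation only
rewrites the first `m` edges, through a bijection of prefixes onto those of the paths with a
non-minimal edge below `m`; its inverse steps back to the preceding edge and the maximal path
below it. Since `η` gives every cylinder of length `m` the same mass `1 / (m+1)!`, it is
preserved on these sets. The paths whose first `m` edges are all maximal (or all minimal) have
at most `m + 1` prefixes, hence mass at most `1 / m!`, and letting `m → ∞` gives invariance on
every cylinder, hence on every Borel set.
-/

open Function Set
open scoped Nat Topology

/-! ### Functions of finitely many coordinates -/

section DependsOn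

variable {ι : Type*} {α : ι → Type*} [∀ i, MeasurableSpace (α i)] [∀ i, Countable (α i)]
  [∀ i, MeasurableSingletonClass (α i)] {s : Set ι} [Finite s]

theorem Function.DependsOn.measurable {β : Type*} [MeasurableSpace β] {f : (Π i, α i) → β}
    (hf : DependsOn f s) : Measurable f := by
  intro t _
  have : f ⁻¹' t = s.domRestrict ⁻¹' (s.domRestrict '' (f ⁻¹' t)) := by
    refine (subset_preimage_image _ _).antisymm ?_
    rintro x ⟨y, hy, hyx⟩
    rwa [mem_preimage, ← hf fun i hi => congrFun hyx ⟨i, hi⟩]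
  rw [this]
  exact Set.measurable_restrict s MeasurableSet.of_discrete

theorem Function.DependsOn.measurableSet {S : Set (Π i, α i)} (hS : DependsOn (· ∈ S) s) :
    MeasurableSet S :=
  measurableSet_setOfPred.mpr hS.measurable

end DependsOn

theorem measurable_of_eqOn_cover {α β ι : Type*} [MeasurableSpace α] [MeasurableSpace β]
    [Countable ι] {f : α → β} {t : ι → Set α} {g : ι → α → β} (ht : ∀ i, MeasurableSet (t i))
    (hcover : ∀ a, ∃ i, a ∈ t i) (hg : ∀ i, Measurable (g i)) (hfg : ∀ i, EqOn f (g i) (t i)) :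
    Measurable f := by
  intro s hs
  have : f ⁻¹' s = ⋃ i, t i ∩ g i ⁻¹' s := by
    ext a
    obtain ⟨i, hi⟩ := hcover a
    simp only [mem_preimage, mem_iUnion, mem_inter_iff]
    exact ⟨fun has => ⟨i, hi, hfg i hi ▸ has⟩, fun ⟨j, hj, hjs⟩ => hfg j hj ▸ hjs⟩
  rw [this]
  exact .iUnion fun i => (ht i).inter (hg i hs)

lemma Set.ncard_image_eq_ncard_image {α β γ : Type*} {S : Set α} {f : α → β} {g : α → γ}
    (h : ∀ x ∈ S, ∀ y ∈ S, f x = f y ↔ g x = g y) : (f '' S).ncard = (g '' S).ncard := by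
  rcases S.eq_empty_or_nonempty with rfl | ⟨a, ha⟩
  · simp
  have : Nonempty α := ⟨a⟩
  have hinv : ∀ x ∈ S, invFunOn f S (f x) ∈ S ∧ f (invFunOn f S (f x)) = f x :=
    fun x hx => invFunOn_pos ⟨x, hx, rfl⟩
  have himage : (g ∘ invFunOn f S) '' (f '' S) = g '' S := by
    rw [image_image]
    refine image_congr fun x hx => ?_
    exact (h _ (hinv x hx).1 x hx).mp (hinv x hx).2
  rw [← himage]
  refine (InjOn.ncard_image ?_).symm
  rintro _ ⟨x, hx, rfl⟩ _ ⟨y, hy, rfl⟩ hxy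
  rw [← (hinv x hx).2, ← (hinv y hy).2]
  exact (h _ (hinv x hx).1 _ (hinv y hy).1).mpr hxy

lemma domRestrict_Iio_eq_iff {β : ℕ → Type*} {m : ℕ} {x y : Π n, β n} :
    (Iio m).domRestrict x = (Iio m).domRestrict y ↔ ∀ i < m, x i = y i := by
  simp [funext_iff]

section UniformCylinders

variable {β : ℕ → Type*} [∀ n, Finite (β n)] [∀ n, MeasurableSpace (β n)]
  [∀ n, MeasurableSingletonClass (β n)] {μ : Measure (Π n, β n)} {m : ℕ} {p : ℝ≥0∞}

lemma measure_eq_ncard_mul (hμ : ∀ c : Π n, β n, μ {x | ∀ i < m, x i = c i} = p)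
    {S : Set (Π n, β n)} (hS : DependsOn (· ∈ S) (Iio m)) :
    μ S = ((Iio m).domRestrict '' S).ncard * p := by
  set ρ := (Iio m).domRestrict (π := β)
  have hfin : (ρ '' S).Finite := toFinite _
  have hS_eq : S = ⋃ w ∈ hfin.toFinset, ρ ⁻¹' {w} := by
    ext x
    simp only [mem_iUnion, mem_preimage, mem_singleton_iff, Finite.mem_toFinset, exists_prop]
    refine ⟨fun hx => ⟨ρ x, mem_image_of_mem ρ hx, rfl⟩, ?_⟩
    rintro ⟨_, ⟨y, hy, rfl⟩, hxy⟩
    exact (hS fun i hi => congrFun hxy ⟨i, hi⟩).mpr hy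
  have hfiber : ∀ w ∈ hfin.toFinset, μ (ρ ⁻¹' {w}) = p := by
    intro w hw
    obtain ⟨c, -, rfl⟩ := hfin.mem_toFinset.mp hw
    rw [← hμ c]
    congr 1
    ext x
    exact domRestrict_Iio_eq_iff
  rw [congrArg μ hS_eq, measure_biUnion_finset, Finset.sum_congr rfl hfiber, Finset.sum_const,
    nsmul_eq_mul, ncard_eq_toFinset_card _ hfin]
  · exact fun v _ w _ hvw => Disjoint.preimage _ (disjoint_singleton.mpr hvw)
  · exact fun w _ => Set.measurable_restrict _ (measurableSet_singleton w)

lemma measure_le_of_prefix_determined (hμ : ∀ c : Π n, β n, μ {x | ∀ i < m, x i = c i} = p)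
    {S : Set (Π n, β n)} (hS : DependsOn (· ∈ S) (Iio m)) {k : (Π n, β n) → ℕ} {N : ℕ}
    (hk : DependsOn k (Iio m)) (hkN : ∀ x ∈ S, k x < N)
    (hdet : ∀ x ∈ S, ∀ y ∈ S, k x = k y → ∀ i < m, x i = y i) : μ S ≤ N * p := by
  rw [measure_eq_ncard_mul hμ hS, ncard_image_eq_ncard_image (g := k)]
  · gcongr
    calc (k '' S).ncard ≤ (Iio N).ncard := ncard_le_ncard (by grind) (toFinite _)
      _ = N := by simp
  · exact fun x hx y hy => ⟨fun hxy => hk fun i hi => congrFun hxy ⟨i, hi⟩,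
      fun hxy => domRestrict_Iio_eq_iff.mpr (hdet x hx y hy hxy)⟩

lemma measure_eq_of_bijOn (hμ : ∀ c : Π n, β n, μ {x | ∀ i < m, x i = c i} = p)
    {f : (Π n, β n) → Π n, β n} {S S' : Set (Π n, β n)} (hf : BijOn f S S')
    (hS : DependsOn (· ∈ S) (Iio m)) (hS' : DependsOn (· ∈ S') (Iio m))
    (htail : ∀ x ∈ S, ∀ i, m ≤ i → f x i = x i)
    (hprefix : ∀ x ∈ S, ∀ y ∈ S, (∀ i < m, x i = y i) → ∀ i < m, f x i = f y i) :
    μ S = μ S' := by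
  rw [measure_eq_ncard_mul hμ hS, measure_eq_ncard_mul hμ hS', ← hf.image_eq, image_image,
    ncard_image_eq_ncard_image]
  intro x hx y hy
  simp only [domRestrict_Iio_eq_iff]
  refine ⟨hprefix x hx y hy, fun hfxy => ?_⟩
  -- splicing the prefix of `y` onto `x` stays in `S` and does not change the image of `x`
  set z := (Iio m).piecewise y x
  have hzy : ∀ i < m, z i = y i := fun i hi => piecewise_eq_of_mem _ _ _ hi
  have hz : z ∈ S := (hS hzy).mpr hy
  have hzx : f z = f x := by
    funext i
    by_cases hi : i < m
    · rw [hprefix z hz y hy hzy i hi, hfxy i hi]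
    · rw [htail z hz i (not_lt.mp hi), htail x hx i (not_lt.mp hi)]
      exact piecewise_eq_of_notMem _ _ _ hi
  intro i hi
  rw [← hzy i hi, hf.injOn hz hx hzx]

end UniformCylinders

/-! ### Vertices and extremal edges -/

lemma kv_succ (x : EulerPath) (n : ℕ) :
    kv x (n + 1) = if (x n : ℕ) ≤ kv x n then kv x n else kv x n + 1 := rfl

lemma kv_le (x : EulerPath) : ∀ n, kv x n ≤ n
  | 0 => le_rfl
  | n + 1 => by have := kv_le x n; rw [kv_succ]; split <;> omega

lemma dependsOn_kv : ∀ n, DependsOn (fun x : EulerPath => kv x n) (Iio n)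
  | 0 => fun _ _ _ => rfl
  | n + 1 => fun x y h => by
    have hn : kv x n = kv y n := dependsOn_kv n fun i hi => h i (Nat.lt_succ_of_lt hi)
    simp only [kv_succ, hn, h n (Nat.lt_succ_self n)]

/-- Dual of `IsMaxEdge`: `x j` is the first right edge into `(j+1, kv x (j+1))`, or the unique
edge into `(j+1, 0)`. -/
def IsMinEdge (x : EulerPath) (j : ℕ) : Prop :=
  (x j : ℕ) = kv x j + 1 ∨ kv x (j + 1) = 0

lemma dependsOn_isMaxEdge (j : ℕ) : DependsOn (fun x => IsMaxEdge x j) (Iio (j + 1)) :=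
  fun x y h => by
    simp only [IsMaxEdge, h j (Nat.lt_succ_self j),
      dependsOn_kv j fun i hi => h i (Nat.lt_succ_of_lt hi), dependsOn_kv (j + 1) h]

lemma dependsOn_isMinEdge (j : ℕ) : DependsOn (fun x => IsMinEdge x j) (Iio (j + 1)) :=
  fun x y h => by
    simp only [IsMinEdge, h j (Nat.lt_succ_self j),
      dependsOn_kv j fun i hi => h i (Nat.lt_succ_of_lt hi), dependsOn_kv (j + 1) h]

lemma IsMaxEdge.kv_eq {x : EulerPath} {j : ℕ} (h : IsMaxEdge x j) :
    kv x j = min (kv x (j + 1)) j := by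
  have := kv_le x j; unfold IsMaxEdge at h; rw [kv_succ] at h ⊢; split_ifs at h ⊢ <;> omega

lemma IsMaxEdge.val_eq {x : EulerPath} {j : ℕ} (h : IsMaxEdge x j) :
    (x j : ℕ) = min (kv x (j + 1)) (j + 1) := by
  have := kv_le x j; have := (x j).isLt
  unfold IsMaxEdge at h; rw [kv_succ] at h ⊢; split_ifs at h ⊢ <;> omega

lemma IsMinEdge.kv_eq {x : EulerPath} {j : ℕ} (h : IsMinEdge x j) :
    kv x j = kv x (j + 1) - 1 := by
  unfold IsMinEdge at h; rw [kv_succ] at h ⊢; split_ifs at h ⊢ <;> omega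

lemma IsMinEdge.val_eq {x : EulerPath} {j : ℕ} (h : IsMinEdge x j) :
    (x j : ℕ) = kv x (j + 1) := by
  unfold IsMinEdge at h; rcases h with h | h <;> rw [kv_succ] at * <;> split_ifs at * <;> omega

lemma eq_of_kv_eq_of_backward {x y : EulerPath} {m : ℕ} (label src : ℕ → ℕ → ℕ)
    (hx : ∀ i < m, (x i : ℕ) = label i (kv x (i + 1)) ∧ kv x i = src i (kv x (i + 1)))
    (hy : ∀ i < m, (y i : ℕ) = label i (kv y (i + 1)) ∧ kv y i = src i (kv y (i + 1)))
    (hm : kv x m = kv y m) : ∀ i < m, x i = y i := by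
  induction m with
  | zero => intro i hi; omega
  | succ m ih =>
    have hkv : kv x m = kv y m := by rw [(hx m m.lt_succ_self).2, (hy m m.lt_succ_self).2, hm]
    intro i hi
    rcases Nat.lt_succ_iff_lt_or_eq.mp hi with hi | rfl
    · exact ih (fun i hi => hx i (by omega)) (fun i hi => hy i (by omega)) hkv i hi
    · exact Fin.ext (by rw [(hx i hi).1, (hy i hi).1, hm])

lemma eq_of_forall_isMaxEdge {x y : EulerPath} {m : ℕ} (hx : ∀ i < m, IsMaxEdge x i)
    (hy : ∀ i < m, IsMaxEdge y i) (hm : kv x m = kv y m) : ∀ i < m, x i = y i :=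
  eq_of_kv_eq_of_backward (fun i k => min k (i + 1)) (fun i k => min k i)
    (fun i hi => ⟨(hx i hi).val_eq, (hx i hi).kv_eq⟩)
    (fun i hi => ⟨(hy i hi).val_eq, (hy i hi).kv_eq⟩) hm

lemma eq_of_forall_isMinEdge {x y : EulerPath} {m : ℕ} (hx : ∀ i < m, IsMinEdge x i)
    (hy : ∀ i < m, IsMinEdge y i) (hm : kv x m = kv y m) : ∀ i < m, x i = y i :=
  eq_of_kv_eq_of_backward (fun _ k => k) (fun _ k => k - 1)
    (fun i hi => ⟨(hx i hi).val_eq, (hx i hi).kv_eq⟩)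
    (fun i hi => ⟨(hy i hi).val_eq, (hy i hi).kv_eq⟩) hm

/-- The label at level `i < j` of the minimal path from the root to `(j, k)`: it goes left
until level `j - k` and right from then on. -/
def minLabel (j k i : ℕ) : ℕ := if i + 1 ≤ j - k then 0 else k + i + 1 - j

lemma kv_of_eq_minLabel {y : EulerPath} {j k : ℕ} (hk : k ≤ j)
    (h : ∀ i < j, (y i : ℕ) = minLabel j k i) : ∀ i ≤ j, kv y i = k - (j - i) := by
  intro i hi
  induction i with
  | zero => simp [kv]; omega
  | succ i ih =>
    rw [kv_succ, ih (by omega), h i (by omega), minLabel]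
    split_ifs <;> omega

lemma isMinEdge_of_eq_minLabel {y : EulerPath} {j k : ℕ} (hk : k ≤ j)
    (h : ∀ i < j, (y i : ℕ) = minLabel j k i) {i : ℕ} (hi : i < j) : IsMinEdge y i := by
  have h1 := kv_of_eq_minLabel hk h i hi.le
  have h2 := kv_of_eq_minLabel hk h (i + 1) hi
  have h3 := h i hi
  unfold IsMinEdge; unfold minLabel at h3
  split_ifs at h3 <;> omega

lemma kv_of_eq_min {y : EulerPath} {j k : ℕ}
    (h : ∀ i < j, (y i : ℕ) = min k (i + 1)) : ∀ i ≤ j, kv y i = min k i := by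
  intro i hi
  induction i with
  | zero => simp [kv]
  | succ i ih =>
    rw [kv_succ, ih (by omega), h i (by omega)]
    split_ifs <;> omega

lemma isMaxEdge_of_eq_min {y : EulerPath} {j k : ℕ}
    (h : ∀ i < j, (y i : ℕ) = min k (i + 1)) {i : ℕ} (hi : i < j) : IsMaxEdge y i := by
  have h1 := kv_of_eq_min h i hi.le
  have h2 := kv_of_eq_min h (i + 1) hi
  have h3 := h i hi
  unfold IsMaxEdge
  omega

/-! ### The adic transformation and its inverse -/

/-- The source level-`j` vertex of the edge following `x j` among the edges into
`(j+1, kv x (j+1))`. -/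
def nextSource (x : EulerPath) (j : ℕ) : ℕ :=
  if (x j : ℕ) = j + 1 then kv x (j + 1) else kv x j

/-- The body of `eulerAdic` when `j` is the first index at which `x` has a non-maximal edge. -/
def incrementAt (j : ℕ) (x : EulerPath) : EulerPath := fun n =>
  if j < n then x n
  else if hn : n = j then
    ⟨if (x j : ℕ) = j + 1 then 0 else (x j : ℕ) + 1, by have := (x j).isLt; split_ifs <;> omega⟩
  else ⟨minLabel j (nextSource x j) n % (n + 2), Nat.mod_lt _ (by omega)⟩

def IsFirstNonMaxEdge (x : EulerPath) (j : ℕ) : Prop :=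
  (∀ i < j, IsMaxEdge x i) ∧ ¬ IsMaxEdge x j

lemma isFirstNonMaxEdge_find {x : EulerPath} (h : ∃ j, ¬ IsMaxEdge x j) :
    IsFirstNonMaxEdge x (Nat.find h) :=
  ⟨fun _ hi => not_not.mp (Nat.find_min h hi), Nat.find_spec h⟩

lemma IsFirstNonMaxEdge.eulerAdic_eq {x : EulerPath} {j : ℕ} (hx : IsFirstNonMaxEdge x j) :
    eulerAdic x = incrementAt j x := by
  have h : ∃ j, ¬ IsMaxEdge x j := ⟨j, hx.2⟩
  obtain rfl : Nat.find h = j := (Nat.find_eq_iff h).mpr ⟨hx.2, fun i hi => not_not.mpr (hx.1 i hi)⟩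
  rw [eulerAdic, dif_pos h]
  rfl

lemma nextSource_le {x : EulerPath} {j : ℕ} (h : ¬ IsMaxEdge x j) : nextSource x j ≤ j := by
  have := kv_le x j; have := kv_le x (j + 1)
  unfold IsMaxEdge at h; unfold nextSource; split_ifs <;> omega

lemma incrementAt_apply_of_lt {x : EulerPath} {j n : ℕ} (hn : j < n) :
    incrementAt j x n = x n := if_pos hn

lemma incrementAt_apply_self (x : EulerPath) (j : ℕ) :
    (incrementAt j x j : ℕ) = if (x j : ℕ) = j + 1 then 0 else (x j : ℕ) + 1 := by
  simp [incrementAt]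

lemma incrementAt_apply_of_gt {x : EulerPath} {j n : ℕ} (h : ¬ IsMaxEdge x j) (hn : n < j) :
    (incrementAt j x n : ℕ) = minLabel j (nextSource x j) n := by
  have := nextSource_le h
  simp only [incrementAt, if_neg (by omega : ¬ j < n), dif_neg (by omega : n ≠ j)]
  exact Nat.mod_eq_of_lt (by unfold minLabel; split_ifs <;> omega)

lemma kv_incrementAt_of_le {x : EulerPath} {j : ℕ} (h : ¬ IsMaxEdge x j) {i : ℕ} (hi : i ≤ j) :
    kv (incrementAt j x) i = nextSource x j - (j - i) :=
  kv_of_eq_minLabel (nextSource_le h) (fun _ hn => incrementAt_apply_of_gt h hn) i hi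

lemma isMinEdge_incrementAt {x : EulerPath} {j : ℕ} (h : ¬ IsMaxEdge x j) {i : ℕ} (hi : i < j) :
    IsMinEdge (incrementAt j x) i :=
  isMinEdge_of_eq_minLabel (nextSource_le h) (fun _ hn => incrementAt_apply_of_gt h hn) hi

lemma kv_incrementAt_self {x : EulerPath} {j : ℕ} (h : ¬ IsMaxEdge x j) :
    kv (incrementAt j x) j = nextSource x j := by
  simpa using kv_incrementAt_of_le h le_rfl

lemma kv_incrementAt_succ {x : EulerPath} {j : ℕ} (h : ¬ IsMaxEdge x j) :
    kv (incrementAt j x) (j + 1) = kv x (j + 1) := by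
  have hj := kv_incrementAt_self h
  have hxj := incrementAt_apply_self x j
  have := kv_le x j; have := (x j).isLt
  unfold IsMaxEdge at h; unfold nextSource at hj
  have := kv_succ x j
  rw [kv_succ, hj, hxj]
  split_ifs at * <;> omega

lemma not_isMinEdge_incrementAt {x : EulerPath} {j : ℕ} (h : ¬ IsMaxEdge x j) :
    ¬ IsMinEdge (incrementAt j x) j := by
  have hj := kv_incrementAt_self h
  have hj1 := kv_incrementAt_succ h
  have hxj := incrementAt_apply_self x j
  have := kv_le x j; have := kv_succ x j
  unfold IsMaxEdge at h; unfold IsMinEdge; unfold nextSource at hj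
  rw [hj1, hxj, hj]
  split_ifs at * <;> grind

lemma pathLT_incrementAt {x : EulerPath} {j : ℕ} (h : ¬ IsMaxEdge x j) :
    pathLT x (incrementAt j x) := by
  refine ⟨j, fun n hn => (incrementAt_apply_of_lt hn).symm, (kv_incrementAt_succ h).symm, ?_⟩
  have hj := kv_incrementAt_self h
  have hxj := incrementAt_apply_self x j
  have := kv_le x j; have := kv_succ x j
  unfold IsMaxEdge at h; unfold nextSource at hj
  rw [hj, hxj]
  split_ifs at * <;> omega

lemma dependsOn_isFirstNonMaxEdge (j : ℕ) :
    DependsOn (fun x => IsFirstNonMaxEdge x j) (Iio (j + 1)) := fun x y h => by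
  have hlt : ∀ i < j, IsMaxEdge x i ↔ IsMaxEdge y i := fun i hi => Iff.of_eq <|
    dependsOn_isMaxEdge i fun l hl => h l (by simp only [mem_Iio] at hl ⊢; omega)
  simp only [IsFirstNonMaxEdge, dependsOn_isMaxEdge j h, eq_iff_iff]
  exact and_congr_left' (forall₂_congr hlt)

lemma dependsOn_incrementAt_apply (j n : ℕ) :
    DependsOn (fun x => incrementAt j x n) (Iio (max j n + 1)) := fun x y h => by
  have hsrc : nextSource x j = nextSource y j := by
    simp only [nextSource, h j (by simp only [mem_Iio]; omega),
      dependsOn_kv j fun i hi => h i (by simp only [mem_Iio] at hi ⊢; omega),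
      dependsOn_kv (j + 1) fun i hi => h i (by simp only [mem_Iio] at hi ⊢; omega)]
  simp only [incrementAt, hsrc, h j (by simp only [mem_Iio]; omega),
    h n (by simp only [mem_Iio]; omega)]

lemma measurable_incrementAt (j : ℕ) : Measurable (incrementAt j) :=
  measurable_pi_lambda _ fun n => (dependsOn_incrementAt_apply j n).measurable

/-- The source level-`j` vertex of the edge preceding `y j` among the edges into
`(j+1, kv y (j+1))`. -/
def prevSource (y : EulerPath) (j : ℕ) : ℕ :=
  if (y j : ℕ) = 0 then kv y (j + 1) - 1 else kv y j

/-- Inverse of `incrementAt`: the edge at level `j` is replaced by the preceding edge into the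
same vertex, and the edges below by the maximal path to its source. -/
def decrementAt (j : ℕ) (y : EulerPath) : EulerPath := fun n =>
  if j < n then y n
  else if n = j then
    ⟨if (y n : ℕ) = 0 then n + 1 else (y n : ℕ) - 1, by have := (y n).isLt; split_ifs <;> omega⟩
  else ⟨min (prevSource y j) (n + 1), by omega⟩

noncomputable def eulerAdicInv (y : EulerPath) : EulerPath :=
  if h : ∃ j, ¬ IsMinEdge y j then decrementAt (Nat.find h) y else y

def IsFirstNonMinEdge (y : EulerPath) (j : ℕ) : Prop :=
  (∀ i < j, IsMinEdge y i) ∧ ¬ IsMinEdge y j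

lemma isFirstNonMinEdge_find {y : EulerPath} (h : ∃ j, ¬ IsMinEdge y j) :
    IsFirstNonMinEdge y (Nat.find h) :=
  ⟨fun _ hi => not_not.mp (Nat.find_min h hi), Nat.find_spec h⟩

lemma IsFirstNonMinEdge.eulerAdicInv_eq {y : EulerPath} {j : ℕ} (hy : IsFirstNonMinEdge y j) :
    eulerAdicInv y = decrementAt j y := by
  have h : ∃ j, ¬ IsMinEdge y j := ⟨j, hy.2⟩
  obtain rfl : Nat.find h = j := (Nat.find_eq_iff h).mpr ⟨hy.2, fun i hi => not_not.mpr (hy.1 i hi)⟩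
  rw [eulerAdicInv, dif_pos h]

lemma kv_succ_le_of_not_isMinEdge {y : EulerPath} {j : ℕ} (h : ¬ IsMinEdge y j) :
    kv y (j + 1) ≤ j := by
  have := kv_le y j; have := kv_succ y j; have := (y j).isLt
  unfold IsMinEdge at h; split_ifs at * <;> omega

lemma prevSource_le {y : EulerPath} {j : ℕ} (h : ¬ IsMinEdge y j) : prevSource y j ≤ j := by
  have := kv_succ_le_of_not_isMinEdge h; have := kv_le y j
  unfold prevSource; split_ifs <;> omega

lemma decrementAt_apply_of_lt {y : EulerPath} {j n : ℕ} (hn : j < n) :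
    decrementAt j y n = y n := if_pos hn

lemma decrementAt_apply_self (y : EulerPath) (j : ℕ) :
    (decrementAt j y j : ℕ) = if (y j : ℕ) = 0 then j + 1 else (y j : ℕ) - 1 := by
  simp [decrementAt]

lemma decrementAt_apply_of_gt {y : EulerPath} {j n : ℕ} (hn : n < j) :
    (decrementAt j y n : ℕ) = min (prevSource y j) (n + 1) := by
  simp [decrementAt, if_neg (by omega : ¬ j < n), if_neg (by omega : n ≠ j)]

lemma kv_decrementAt_self {y : EulerPath} {j : ℕ} (h : ¬ IsMinEdge y j) :
    kv (decrementAt j y) j = prevSource y j := by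
  rw [kv_of_eq_min (fun _ hn => decrementAt_apply_of_gt hn) j le_rfl, min_eq_left (prevSource_le h)]

lemma isMaxEdge_decrementAt {y : EulerPath} {j i : ℕ} (hi : i < j) :
    IsMaxEdge (decrementAt j y) i :=
  isMaxEdge_of_eq_min (fun _ hn => decrementAt_apply_of_gt hn) hi

lemma kv_decrementAt_succ {y : EulerPath} {j : ℕ} (h : ¬ IsMinEdge y j) :
    kv (decrementAt j y) (j + 1) = kv y (j + 1) := by
  have hj := kv_decrementAt_self h
  have hyj := decrementAt_apply_self y j
  have := kv_le y j; have := (y j).isLt; have := kv_succ y j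
  have := kv_succ_le_of_not_isMinEdge h
  unfold IsMinEdge at h; unfold prevSource at hj
  rw [kv_succ, hj, hyj]
  split_ifs at * <;> grind

lemma not_isMaxEdge_decrementAt {y : EulerPath} {j : ℕ} (h : ¬ IsMinEdge y j) :
    ¬ IsMaxEdge (decrementAt j y) j := by
  have hj := kv_decrementAt_self h
  have hj1 := kv_decrementAt_succ h
  have hyj := decrementAt_apply_self y j
  have := kv_le y j; have := kv_succ y j
  have := kv_succ_le_of_not_isMinEdge h
  unfold IsMinEdge at h; unfold IsMaxEdge; unfold prevSource at hj
  rw [hj1, hyj, hj]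
  split_ifs at * <;> grind

lemma IsFirstNonMaxEdge.isFirstNonMinEdge_incrementAt {x : EulerPath} {j : ℕ}
    (hx : IsFirstNonMaxEdge x j) : IsFirstNonMinEdge (incrementAt j x) j :=
  ⟨fun _ hi => isMinEdge_incrementAt hx.2 hi, not_isMinEdge_incrementAt hx.2⟩

lemma IsFirstNonMinEdge.isFirstNonMaxEdge_decrementAt {y : EulerPath} {j : ℕ}
    (hy : IsFirstNonMinEdge y j) : IsFirstNonMaxEdge (decrementAt j y) j :=
  ⟨fun _ hi => isMaxEdge_decrementAt hi, not_isMaxEdge_decrementAt hy.2⟩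

lemma decrementAt_incrementAt {x : EulerPath} {j : ℕ} (hx : IsFirstNonMaxEdge x j) :
    decrementAt j (incrementAt j x) = x := by
  have hy := hx.isFirstNonMinEdge_incrementAt
  have hxj := incrementAt_apply_self x j
  have hsrc : prevSource (incrementAt j x) j = kv x j := by
    have := kv_incrementAt_self hx.2; have := kv_incrementAt_succ hx.2; have := kv_succ x j
    have := kv_le x j
    unfold prevSource; unfold nextSource at *
    split_ifs at * <;> omega
  funext n
  rcases lt_trichotomy j n with h | rfl | h
  · rw [decrementAt_apply_of_lt h, incrementAt_apply_of_lt h]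
  · have := (x j).isLt
    ext
    rw [decrementAt_apply_self, hxj]
    split_ifs at * <;> omega
  · refine eq_of_forall_isMaxEdge (fun _ hi => isMaxEdge_decrementAt hi) hx.1 ?_ n h
    rw [kv_decrementAt_self hy.2, hsrc]

lemma incrementAt_decrementAt {y : EulerPath} {j : ℕ} (hy : IsFirstNonMinEdge y j) :
    incrementAt j (decrementAt j y) = y := by
  have hx := hy.isFirstNonMaxEdge_decrementAt
  have hyj := decrementAt_apply_self y j
  have hsrc : nextSource (decrementAt j y) j = kv y j := by
    have := kv_decrementAt_self hy.2; have := kv_decrementAt_succ hy.2; have := kv_succ y j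
    have := (y j).isLt
    unfold nextSource; unfold prevSource at *
    split_ifs at * <;> omega
  funext n
  rcases lt_trichotomy j n with h | rfl | h
  · rw [incrementAt_apply_of_lt h, decrementAt_apply_of_lt h]
  · have := (y j).isLt
    ext
    rw [incrementAt_apply_self, hyj]
    split_ifs at * <;> omega
  · refine eq_of_forall_isMinEdge (fun _ hi => isMinEdge_incrementAt hx.2 hi) hy.1 ?_ n h
    rw [kv_incrementAt_self hx.2, hsrc]

lemma not_pathLT_of_forall_isMaxEdge {x : EulerPath} (hx : ∀ j, IsMaxEdge x j) (y : EulerPath) :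
    ¬ pathLT x y := by
  rintro ⟨N, -, hkv, hlt⟩
  have := (hx N).kv_eq; have := (hx N).val_eq
  have := kv_le y N; have := kv_succ y N; have := (y N).isLt
  split_ifs at * <;> omega

lemma not_pathLT_of_forall_isMinEdge {y : EulerPath} (hy : ∀ j, IsMinEdge y j) (x : EulerPath) :
    ¬ pathLT x y := by
  rintro ⟨N, -, hkv, hlt⟩
  have := (hy N).kv_eq; have := (hy N).val_eq; have := kv_succ x N
  split_ifs at * <;> omega

lemma mem_Xmax_iff {x : EulerPath} : x ∈ Xmax ↔ ∀ j, IsMaxEdge x j :=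
  ⟨fun hx _ => by_contra fun hj => hx ⟨_, pathLT_incrementAt hj⟩,
    fun hx ⟨y, hy⟩ => not_pathLT_of_forall_isMaxEdge hx y hy⟩

lemma exists_isFirstNonMaxEdge_le {x : EulerPath} {k : ℕ} (hk : ¬ IsMaxEdge x k) :
    ∃ j ≤ k, IsFirstNonMaxEdge x j :=
  ⟨_, Nat.find_le hk, isFirstNonMaxEdge_find ⟨k, hk⟩⟩

lemma exists_isFirstNonMinEdge_le {y : EulerPath} {k : ℕ} (hk : ¬ IsMinEdge y k) :
    ∃ j ≤ k, IsFirstNonMinEdge y j :=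
  ⟨_, Nat.find_le hk, isFirstNonMinEdge_find ⟨k, hk⟩⟩

lemma mem_Xmin_iff {y : EulerPath} : y ∈ Xmin ↔ ∀ j, IsMinEdge y j := by
  refine ⟨fun hy => ?_, fun hy ⟨x, hx⟩ => not_pathLT_of_forall_isMinEdge hy x hx⟩
  by_contra! h
  obtain ⟨k, hk⟩ := h
  obtain ⟨j, -, hj⟩ := exists_isFirstNonMinEdge_le hk
  have := pathLT_incrementAt hj.isFirstNonMaxEdge_decrementAt.2
  rw [incrementAt_decrementAt hj] at this
  exact hy ⟨_, this⟩

lemma notMem_Xmax_of_not_isMaxEdge {x : EulerPath} {j : ℕ} (h : ¬ IsMaxEdge x j) : x ∉ Xmax :=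
  fun hx => h (mem_Xmax_iff.mp hx j)

lemma notMem_Xmin_of_not_isMinEdge {y : EulerPath} {j : ℕ} (h : ¬ IsMinEdge y j) : y ∉ Xmin :=
  fun hy => h (mem_Xmin_iff.mp hy j)

lemma exists_isFirstNonMaxEdge {x : EulerPath} (hx : x ∉ Xmax) : ∃ j, IsFirstNonMaxEdge x j := by
  obtain ⟨k, hk⟩ := not_forall.mp (mt mem_Xmax_iff.mpr hx)
  exact (exists_isFirstNonMaxEdge_le hk).imp fun _ => And.right

lemma exists_isFirstNonMinEdge {y : EulerPath} (hy : y ∉ Xmin) : ∃ j, IsFirstNonMinEdge y j := by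
  obtain ⟨k, hk⟩ := not_forall.mp (mt mem_Xmin_iff.mpr hy)
  exact (exists_isFirstNonMinEdge_le hk).imp fun _ => And.right

lemma bijOn_eulerAdic : BijOn eulerAdic Xmaxᶜ Xminᶜ := by
  refine InvOn.bijOn (f' := eulerAdicInv) ⟨fun x hx => ?_, fun y hy => ?_⟩ (fun x hx => ?_)
    (fun y hy => ?_)
  · obtain ⟨j, hj⟩ := exists_isFirstNonMaxEdge hx
    rw [hj.eulerAdic_eq, hj.isFirstNonMinEdge_incrementAt.eulerAdicInv_eq,
      decrementAt_incrementAt hj]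
  · obtain ⟨j, hj⟩ := exists_isFirstNonMinEdge hy
    rw [hj.eulerAdicInv_eq, hj.isFirstNonMaxEdge_decrementAt.eulerAdic_eq,
      incrementAt_decrementAt hj]
  · obtain ⟨j, hj⟩ := exists_isFirstNonMaxEdge hx
    rw [hj.eulerAdic_eq]
    exact notMem_Xmin_of_not_isMinEdge (not_isMinEdge_incrementAt hj.2)
  · obtain ⟨j, hj⟩ := exists_isFirstNonMinEdge hy
    rw [hj.eulerAdicInv_eq]
    exact notMem_Xmax_of_not_isMaxEdge (not_isMaxEdge_decrementAt hj.2)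

lemma eulerAdic_of_mem_Xmax {x : EulerPath} (hx : x ∈ Xmax) : eulerAdic x = x := by
  rw [eulerAdic, dif_neg (not_exists_not.mpr (mem_Xmax_iff.mp hx))]

lemma measurableSet_Xmax : MeasurableSet Xmax := by
  have : Xmax = ⋂ j, {x | IsMaxEdge x j} := by ext; simp [mem_Xmax_iff]
  rw [this]
  exact .iInter fun j => (dependsOn_isMaxEdge j).measurableSet

lemma measurable_eulerAdic : Measurable eulerAdic := by
  refine measurable_of_eqOn_cover
    (t := fun o : Option ℕ => o.elim Xmax fun j => {x | IsFirstNonMaxEdge x j})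
    (g := fun o => o.elim id incrementAt) (fun o => ?_) (fun x => ?_) (fun o => ?_) (fun o => ?_)
  · cases o
    exacts [measurableSet_Xmax, (dependsOn_isFirstNonMaxEdge _).measurableSet]
  · by_cases hx : x ∈ Xmax
    · exact ⟨none, hx⟩
    · obtain ⟨j, hj⟩ := exists_isFirstNonMaxEdge hx
      exact ⟨some j, hj⟩
  · cases o
    exacts [measurable_id, measurable_incrementAt _]
  · cases o
    exacts [fun _ => eulerAdic_of_mem_Xmax, fun _ => IsFirstNonMaxEdge.eulerAdic_eq]

/-! ### Invariance of the symmetric measure -/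

lemma prod_range_inv_add_two (m : ℕ) :
    ∏ i ∈ Finset.range m, ((i : ℝ≥0∞) + 2)⁻¹ = ((m + 1)! : ℝ≥0∞)⁻¹ := by
  induction m with
  | zero => simp
  | succ m ih =>
    rw [Finset.prod_range_succ, ih, Nat.factorial_succ (m + 1), Nat.cast_mul,
      ENNReal.mul_inv (by simp) (by simp), mul_comm]
    congr 2
    push_cast
    ring

lemma add_one_mul_inv_factorial_succ (m : ℕ) :
    ((m : ℝ≥0∞) + 1) * ((m + 1)! : ℝ≥0∞)⁻¹ = (m ! : ℝ≥0∞)⁻¹ := by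
  rw [Nat.factorial_succ, Nat.cast_mul, ENNReal.mul_inv (by simp) (by simp), ← mul_assoc]
  push_cast
  rw [ENNReal.mul_inv_cancel (by positivity) (by simp), one_mul]

lemma tendsto_inv_factorial : Tendsto (fun m : ℕ => (m ! : ℝ≥0∞)⁻¹) atTop (𝓝 0) :=
  tendsto_of_tendsto_of_tendsto_of_le_of_le tendsto_const_nhds ENNReal.tendsto_inv_nat_nhds_zero
    (fun _ => zero_le) fun m => ENNReal.inv_le_inv.mpr (by exact_mod_cast Nat.self_le_factorial m)

def allMaxBelow (m : ℕ) : Set EulerPath := {x | ∀ j < m, IsMaxEdge x j}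

def allMinBelow (m : ℕ) : Set EulerPath := {y | ∀ j < m, IsMinEdge y j}

lemma dependsOn_mem_allMaxBelow (m : ℕ) : DependsOn (· ∈ allMaxBelow m) (Iio m) :=
  fun x y h => by
    simp only [allMaxBelow, mem_ofPred_eq, eq_iff_iff]
    refine forall₂_congr fun j hj => Iff.of_eq ?_
    exact dependsOn_isMaxEdge j fun l hl => h l (by simp only [mem_Iio] at hl ⊢; omega)

lemma dependsOn_mem_allMinBelow (m : ℕ) : DependsOn (· ∈ allMinBelow m) (Iio m) :=
  fun x y h => by
    simp only [allMinBelow, mem_ofPred_eq, eq_iff_iff]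
    refine forall₂_congr fun j hj => Iff.of_eq ?_
    exact dependsOn_isMinEdge j fun l hl => h l (by simp only [mem_Iio] at hl ⊢; omega)

lemma exists_isFirstNonMaxEdge_lt {x : EulerPath} {m : ℕ} (hx : x ∉ allMaxBelow m) :
    ∃ j < m, IsFirstNonMaxEdge x j := by
  simp only [allMaxBelow, mem_ofPred_eq, not_forall, exists_prop] at hx
  obtain ⟨k, hkm, hk⟩ := hx
  obtain ⟨j, hjk, hj⟩ := exists_isFirstNonMaxEdge_le hk
  exact ⟨j, hjk.trans_lt hkm, hj⟩

lemma exists_isFirstNonMinEdge_lt {y : EulerPath} {m : ℕ} (hy : y ∉ allMinBelow m) :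
    ∃ j < m, IsFirstNonMinEdge y j := by
  simp only [allMinBelow, mem_ofPred_eq, not_forall, exists_prop] at hy
  obtain ⟨k, hkm, hk⟩ := hy
  obtain ⟨j, hjk, hj⟩ := exists_isFirstNonMinEdge_le hk
  exact ⟨j, hjk.trans_lt hkm, hj⟩

lemma compl_allMaxBelow_subset_compl_Xmax (m : ℕ) : (allMaxBelow m)ᶜ ⊆ Xmaxᶜ :=
  compl_subset_compl.mpr fun _ hx j _ => mem_Xmax_iff.mp hx j

lemma bijOn_eulerAdic_compl_allMaxBelow (m : ℕ) :
    BijOn eulerAdic (allMaxBelow m)ᶜ (allMinBelow m)ᶜ := by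
  refine ⟨fun x hx => ?_, bijOn_eulerAdic.injOn.mono (compl_allMaxBelow_subset_compl_Xmax m),
    fun y hy => ?_⟩
  · obtain ⟨j, hjm, hj⟩ := exists_isFirstNonMaxEdge_lt hx
    rw [hj.eulerAdic_eq]
    exact fun h => not_isMinEdge_incrementAt hj.2 (h j hjm)
  · obtain ⟨j, hjm, hj⟩ := exists_isFirstNonMinEdge_lt hy
    refine ⟨decrementAt j y, fun h => not_isMaxEdge_decrementAt hj.2 (h j hjm), ?_⟩
    rw [hj.isFirstNonMaxEdge_decrementAt.eulerAdic_eq, incrementAt_decrementAt hj]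

lemma eulerAdic_apply_of_le {x : EulerPath} {m : ℕ} (hx : x ∉ allMaxBelow m) {i : ℕ}
    (hi : m ≤ i) : eulerAdic x i = x i := by
  obtain ⟨j, hjm, hj⟩ := exists_isFirstNonMaxEdge_lt hx
  rw [hj.eulerAdic_eq, incrementAt_apply_of_lt (hjm.trans_le hi)]

lemma eulerAdic_apply_eq_of_lt {x y : EulerPath} {m : ℕ} (hx : x ∉ allMaxBelow m)
    (hxy : ∀ i < m, x i = y i) {i : ℕ} (hi : i < m) : eulerAdic x i = eulerAdic y i := by
  obtain ⟨j, hjm, hj⟩ := exists_isFirstNonMaxEdge_lt hx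
  have hyj : IsFirstNonMaxEdge y j :=
    (dependsOn_isFirstNonMaxEdge j fun l hl => hxy l (by simp only [mem_Iio] at hl; omega)).mp hj
  rw [hj.eulerAdic_eq, hyj.eulerAdic_eq]
  exact dependsOn_incrementAt_apply j i fun l hl => hxy l (by simp only [mem_Iio] at hl; omega)

lemma le_of_forall_le_add_inv_factorial {a b : ℝ≥0∞} {n : ℕ}
    (h : ∀ m, n ≤ m → a ≤ b + (m ! : ℝ≥0∞)⁻¹) : a ≤ b :=
  ge_of_tendsto (by simpa using tendsto_const_nhds.add tendsto_inv_factorial)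
    (eventually_atTop.mpr ⟨n, h⟩)

section SymmetricMeasure

variable {η : Measure EulerPath}
  (hη : ∀ (n : ℕ) (c : EulerPath), η {x | ∀ i < n, x i = c i} = ((n + 1)! : ℝ≥0∞)⁻¹)
include hη

/-- The prefix of length `m` of a path in `allMaxBelow m` is determined by its vertex at level
`m`, so there are only `m + 1` such prefixes. -/
lemma measure_allMaxBelow_le (m : ℕ) : η (allMaxBelow m) ≤ (m ! : ℝ≥0∞)⁻¹ := by
  rw [← add_one_mul_inv_factorial_succ, ← Nat.cast_succ]
  exact measure_le_of_prefix_determined (hη m) (dependsOn_mem_allMaxBelow m) (dependsOn_kv m)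
    (fun x _ => Nat.lt_succ_of_le (kv_le x m)) fun _ hx _ hy => eq_of_forall_isMaxEdge hx hy

lemma measure_allMinBelow_le (m : ℕ) : η (allMinBelow m) ≤ (m ! : ℝ≥0∞)⁻¹ := by
  rw [← add_one_mul_inv_factorial_succ, ← Nat.cast_succ]
  exact measure_le_of_prefix_determined (hη m) (dependsOn_mem_allMinBelow m) (dependsOn_kv m)
    (fun x _ => Nat.lt_succ_of_le (kv_le x m)) fun _ hx _ hy => eq_of_forall_isMinEdge hx hy

lemma measure_preimage_eulerAdic_inter_compl_allMaxBelow {S : Set EulerPath} {n m : ℕ}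
    (hS : DependsOn (· ∈ S) (Iio n)) (hnm : n ≤ m) :
    η (eulerAdic ⁻¹' S ∩ (allMaxBelow m)ᶜ) = η (S ∩ (allMinBelow m)ᶜ) := by
  have hSm : DependsOn (· ∈ S) (Iio m) := hS.mono (Iio_subset_Iio hnm)
  have hmem : ∀ x y : EulerPath, (∀ i < m, x i = y i) →
      x ∈ eulerAdic ⁻¹' S ∩ (allMaxBelow m)ᶜ → y ∈ eulerAdic ⁻¹' S ∩ (allMaxBelow m)ᶜ :=
    fun x y h ⟨hxS, hx⟩ => ⟨(hSm fun i hi => eulerAdic_apply_eq_of_lt hx h hi).mp hxS,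
      (congrArg Not (dependsOn_mem_allMaxBelow m h)).mp hx⟩
  refine measure_eq_of_bijOn (hη m)
    ((mapsTo_preimage _ _).inter_bijOn (bijOn_eulerAdic_compl_allMaxBelow m) inter_subset_right)
    (fun x y h => propext ⟨hmem x y h, hmem y x fun i hi => (h i hi).symm⟩)
    (fun x y h => by simp only [mem_inter_iff, mem_compl_iff, hSm h, dependsOn_mem_allMinBelow m h])
    (fun x hx i hi => eulerAdic_apply_of_le hx.2 hi)
    (fun x hx y _ h i hi => eulerAdic_apply_eq_of_lt hx.2 h hi)

lemma measure_preimage_eulerAdic_inter_le {S : Set EulerPath} {n m : ℕ}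
    (hS : DependsOn (· ∈ S) (Iio n)) (hnm : n ≤ m) :
    η (eulerAdic ⁻¹' S ∩ Xmaxᶜ) ≤ η S + (m ! : ℝ≥0∞)⁻¹ :=
  calc η (eulerAdic ⁻¹' S ∩ Xmaxᶜ)
      ≤ η (eulerAdic ⁻¹' S ∩ (allMaxBelow m)ᶜ) + η (allMaxBelow m) :=
        (measure_le_inter_add_sdiff _ _ (allMaxBelow m)ᶜ).trans <| add_le_add
          (measure_mono (inter_subset_inter_left _ inter_subset_left))
          (measure_mono (by rw [sdiff_compl]; exact inter_subset_right))
    _ ≤ η S + (m ! : ℝ≥0∞)⁻¹ := by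
        rw [measure_preimage_eulerAdic_inter_compl_allMaxBelow hη hS hnm]
        exact add_le_add (measure_mono inter_subset_left) (measure_allMaxBelow_le hη m)

lemma le_measure_preimage_eulerAdic_inter {S : Set EulerPath} {n m : ℕ}
    (hS : DependsOn (· ∈ S) (Iio n)) (hnm : n ≤ m) :
    η S ≤ η (eulerAdic ⁻¹' S ∩ Xmaxᶜ) + (m ! : ℝ≥0∞)⁻¹ :=
  calc η S ≤ η (S ∩ (allMinBelow m)ᶜ) + η (allMinBelow m) :=
        (measure_le_inter_add_sdiff _ _ (allMinBelow m)ᶜ).trans <| add_le_add le_rfl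
          (measure_mono (by rw [sdiff_compl]; exact inter_subset_right))
    _ ≤ η (eulerAdic ⁻¹' S ∩ Xmaxᶜ) + (m ! : ℝ≥0∞)⁻¹ := by
        rw [← measure_preimage_eulerAdic_inter_compl_allMaxBelow hη hS hnm]
        exact add_le_add (measure_mono (inter_subset_inter_right _
          (compl_allMaxBelow_subset_compl_Xmax m))) (measure_allMinBelow_le hη m)

lemma measure_preimage_eulerAdic_inter {S : Set EulerPath} {n : ℕ}
    (hS : DependsOn (· ∈ S) (Iio n)) : η (eulerAdic ⁻¹' S ∩ Xmaxᶜ) = η S :=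
  le_antisymm (le_of_forall_le_add_inv_factorial fun _ => measure_preimage_eulerAdic_inter_le hη hS)
    (le_of_forall_le_add_inv_factorial fun _ => le_measure_preimage_eulerAdic_inter hη hS)

end SymmetricMeasure

lemma map_restrict_eulerAdic {η : Measure EulerPath} (hη : IsSymmetricMeasure η) :
    (η.restrict Xmaxᶜ).map eulerAdic = η := by
  have hη' : ∀ (n : ℕ) (c : EulerPath), η {x | ∀ i < n, x i = c i} = ((n + 1)! : ℝ≥0∞)⁻¹ :=
    fun n c => (hη.2 n c).trans (prod_range_inv_add_two n)
  have hdep : ∀ {n : ℕ} {S : Set EulerPath}, DependsOn (· ∈ S) (Iio n) →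
      η S = (η.restrict Xmaxᶜ).map eulerAdic S := fun hS => by
    have hSm := hS.measurableSet
    rw [Measure.map_apply measurable_eulerAdic hSm,
      Measure.restrict_apply (measurable_eulerAdic hSm), measure_preimage_eulerAdic_inter hη' hS]
  have := hη.1
  refine (ext_of_generate_finite _ generateFrom_measurableCylinders.symm
    isPiSystem_measurableCylinders (fun s hs => ?_) (hdep (n := 0) fun _ _ _ => rfl)).symm
  obtain ⟨I, S, -, rfl⟩ := (mem_measurableCylinders s).mp hs
  obtain ⟨n, hn⟩ := I.exists_nat_subset_range
  refine hdep (n := n) fun x y h => ?_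
  simp only [mem_cylinder]
  congr! 1
  exact funext fun i => h i (by simpa using hn i.2)

/-- The Euler adic transformation is a bijection from `X \ X_max` onto `X \ X_min`, and
the symmetric measure `η` is invariant under it: for every Borel set `B`,
`η {x ∉ X_max : T x ∈ B} = η B`. -/
theorem euler_adic_bijective_and_measure_preserving
    (η : Measure EulerPath) (hη : IsSymmetricMeasure η) :
    Set.BijOn eulerAdic Xmaxᶜ Xminᶜ ∧
      ∀ B : Set EulerPath, MeasurableSet B →
        η {x | x ∉ Xmax ∧ eulerAdic x ∈ B} = η B := by
  refine ⟨bijOn_eulerAdic, fun B hB => ?_⟩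
  have hset : {x | x ∉ Xmax ∧ eulerAdic x ∈ B} = eulerAdic ⁻¹' B ∩ Xmaxᶜ := by
    ext x
    exact and_comm
  rw [hset, ← Measure.restrict_apply (measurable_eulerAdic hB),
    ← Measure.map_apply measurable_eulerAdic hB, map_restrict_eulerAdic hη]
end

section
/- For every n ≥ 0, η-almost everywhere one has E_η[u_{n+1}² | F_n] = (n/(n+2)) · u_n² + 1. -/
open MeasureTheory Filter
open scoped ENNReal

/-- `u_n = 2 k_n - n` (an integer, viewed in `ℝ`). -/
def u (n : ℕ) (x : EulerPath) : ℝ :=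
  ((2 * (kv x n : ℤ) - (n : ℤ) : ℤ) : ℝ)

/-- `F_n`: the σ-algebra on `X` generated by the coordinates `x_0, …, x_{n-1}`. -/
def coordAlg (n : ℕ) : MeasurableSpace EulerPath :=
  ⨆ i : Fin n, MeasurableSpace.comap (fun x => x i) inferInstance

/-- The filtration `(F_n)` on `X`. -/
def coordFil : Filtration ℕ (inferInstance : MeasurableSpace EulerPath) where
  seq := coordAlg
  mono' := by
    intro i j hij
    exact iSup_le fun v => le_iSup_of_le (⟨v.1, lt_of_lt_of_le v.2 hij⟩ : Fin j) le_rfl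
  le' := fun i => iSup_le fun v => Measurable.comap_le (measurable_pi_apply _)

/-!
Given `F_n`, the path sits at vertex `(n, k)` with `k = k_n`, and the next edge is uniform among
the `n + 2` edges leaving it: `k + 1` of them keep `k` (so `u` drops by one) and `n + 1 - k` raise
it (so `u` grows by one). The increment `ξ = ±1` thus has conditional mean `-u_n / (n + 2)`, whence
`E[(u_n + ξ)² | F_n] = u_n² + 2 u_n E[ξ | F_n] + 1 = n/(n+2) · u_n² + 1`.

Since `F_n` is generated by the finite-valued map `x ↦ (x_0, …, x_{n-1})`, it suffices to compare
integrals over the cylinders of length `n`, each of which splits into `n + 2` cylinders of length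
`n + 1` and equal mass.
-/

open Function

theorem ae_eq_condExp_comap_of_forall_setIntegral_fiber_eq {Ω β : Type*} {m₀ : MeasurableSpace Ω}
    [mβ : MeasurableSpace β] [MeasurableSingletonClass β] [Countable β]
    {μ : Measure Ω} [IsFiniteMeasure μ] {π : Ω → β} (hπ : Measurable π) {f g : Ω → ℝ}
    (hf : Integrable f μ) (hg : StronglyMeasurable[mβ.comap π] g) (hgi : Integrable g μ)
    (hfg : ∀ ω, ∫ x in π ⁻¹' {π ω}, g x ∂μ = ∫ x in π ⁻¹' {π ω}, f x ∂μ) :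
    g =ᵐ[μ] μ[f | mβ.comap π] := by
  refine ae_eq_condExp_of_forall_setIntegral_eq hπ.comap_le hf (fun _ _ _ => hgi.integrableOn)
    ?_ hg.aestronglyMeasurable
  rintro _ ⟨S, -, rfl⟩ -
  have hfiber : ∀ b, ∫ x in π ⁻¹' {b}, g x ∂μ = ∫ x in π ⁻¹' {b}, f x ∂μ := by
    intro b
    by_cases hb : b ∈ Set.range π
    · obtain ⟨ω, rfl⟩ := hb
      exact hfg ω
    · have : π ⁻¹' {b} = ∅ := Set.preimage_singleton_eq_empty.mpr hb
      simp only [this, setIntegral_empty]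
  have hS : π ⁻¹' S = ⋃ b : S, π ⁻¹' {(b : β)} := by
    ext x; simp
  have hmeas : ∀ b : S, MeasurableSet (π ⁻¹' {(b : β)}) :=
    fun b => hπ (measurableSet_singleton _)
  have hdisj : Pairwise (Disjoint on fun b : S => π ⁻¹' {(b : β)}) :=
    fun b b' hne => (Set.disjoint_singleton.mpr (Subtype.coe_injective.ne hne)).preimage π
  rw [hS, integral_iUnion hmeas hdisj hgi.integrableOn, integral_iUnion hmeas hdisj hf.integrableOn]
  exact tsum_congr fun b => hfiber b

namespace EulerPath

def cylinder (m : ℕ) (c : EulerPath) : Set EulerPath := {x | ∀ i < m, x i = c i}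

lemma kv_le (x : EulerPath) : ∀ m, kv x m ≤ m
  | 0 => le_rfl
  | m + 1 => by
    unfold kv
    split_ifs
    · exact (kv_le x m).trans m.le_succ
    · exact Nat.succ_le_succ (kv_le x m)

lemma kv_eq_of_mem_cylinder {x c : EulerPath} : ∀ {m : ℕ}, x ∈ cylinder m c → kv x m = kv c m
  | 0, _ => rfl
  | m + 1, hx => by
    have ih : kv x m = kv c m := kv_eq_of_mem_cylinder fun i hi => hx i (hi.trans m.lt_succ_self)
    simp only [kv, ih, hx m m.lt_succ_self]

lemma u_eq_of_mem_cylinder {x c : EulerPath} {m : ℕ} (hx : x ∈ cylinder m c) : u m x = u m c := by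
  simp only [u, kv_eq_of_mem_cylinder hx]

lemma u_succ (x : EulerPath) (n : ℕ) :
    u (n + 1) x = u n x + if (x n : ℕ) ≤ kv x n then -1 else 1 := by
  simp only [u, kv]
  split_ifs <;> push_cast <;> ring

lemma abs_u_le (x : EulerPath) (m : ℕ) : |u m x| ≤ m := by
  have hk : (kv x m : ℝ) ≤ m := by exact_mod_cast kv_le x m
  rw [u, abs_le]
  push_cast
  constructor <;> linarith [(kv x m).cast_nonneg (α := ℝ)]

lemma measurable_coord {m i : ℕ} (h : i < m) : Measurable[coordAlg m] fun x : EulerPath => x i :=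
  Measurable.of_comap_le <|
    le_iSup (fun j : Fin m => MeasurableSpace.comap (fun x : EulerPath => x j) inferInstance) ⟨i, h⟩

lemma measurable_kv : ∀ m, Measurable[coordAlg m] fun x : EulerPath => kv x m
  | 0 => measurable_const
  | m + 1 => by
    have hx : Measurable[coordAlg (m + 1)] fun x : EulerPath => (x m : ℕ) :=
      measurable_of_countable (fun a : Fin (m + 2) => (a : ℕ)) |>.comp
        (measurable_coord m.lt_succ_self)
    have hk : Measurable[coordAlg (m + 1)] fun x : EulerPath => kv x m :=
      (measurable_kv m).mono (coordFil.mono m.le_succ) le_rfl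
    exact Measurable.ite (measurableSet_le hx hk) hk (hk.add_const 1)

lemma measurable_u (m : ℕ) : Measurable[coordAlg m] (u m) :=
  (measurable_of_countable fun k : ℕ => ((2 * (k : ℤ) - m : ℤ) : ℝ)).comp (measurable_kv m)

lemma integrable_u_sq (η : Measure EulerPath) [IsFiniteMeasure η] (m : ℕ) :
    Integrable (fun x => u m x ^ 2) η := by
  refine Integrable.of_bound
    (((measurable_u m).mono (coordFil.le m) le_rfl).pow_const 2).aestronglyMeasurable
    ((m : ℝ) ^ 2) (Eventually.of_forall fun x => ?_)
  rw [Real.norm_eq_abs, abs_pow]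
  exact pow_le_pow_left₀ (abs_nonneg _) (abs_u_le x m) 2

lemma measurableSet_cylinder (m : ℕ) (c : EulerPath) : MeasurableSet (cylinder m c) := by
  have : cylinder m c = ⋂ i ∈ Set.Iio m, {x : EulerPath | x i = c i} := by
    ext x; simp [cylinder]
  rw [this]
  exact .biInter (Set.to_countable _) fun i _ => measurable_pi_apply i (measurableSet_singleton _)

def restrict (n : ℕ) (x : EulerPath) : ∀ i : Fin n, Fin (i + 2) := fun i => x i

lemma restrict_preimage_singleton (n : ℕ) (c : EulerPath) :
    restrict n ⁻¹' {restrict n c} = cylinder n c := by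
  ext x
  simp only [Set.mem_preimage, Set.mem_singleton_iff, funext_iff, restrict, Fin.forall_iff]
  rfl

lemma measurable_restrict (n : ℕ) : Measurable[coordAlg n] (restrict n) :=
  @measurable_pi_lambda _ _ _ (coordAlg n) _ _ fun i => measurable_coord i.isLt

lemma coordAlg_eq_comap (n : ℕ) : coordAlg n = MeasurableSpace.comap (restrict n) inferInstance :=
  le_antisymm
    (iSup_le fun i => ((measurable_pi_apply i).comp (comap_measurable (restrict n))).comap_le)
    (measurable_restrict n).comap_le

section SymmetricMeasure

variable {η : Measure EulerPath}

lemma measureReal_cylinder (hη : IsSymmetricMeasure η) (m : ℕ) (c : EulerPath) :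
    η.real (cylinder m c) = ∏ i ∈ Finset.range m, ((i : ℝ) + 2)⁻¹ := by
  rw [measureReal_def, cylinder, hη.2 m c, ENNReal.toReal_prod]
  refine Finset.prod_congr rfl fun i _ => ?_
  rw [ENNReal.toReal_inv, ENNReal.toReal_add (by simp) (by simp)]
  simp

lemma setIntegral_cylinder_of_forall_eq (hη : IsSymmetricMeasure η) {m : ℕ} {c : EulerPath}
    {f : EulerPath → ℝ} (hf : ∀ x ∈ cylinder m c, f x = f c) :
    ∫ x in cylinder m c, f x ∂η = (∏ i ∈ Finset.range m, ((i : ℝ) + 2)⁻¹) * f c := by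
  rw [setIntegral_congr_fun (measurableSet_cylinder m c) hf, setIntegral_const, smul_eq_mul,
    measureReal_cylinder hη]

end SymmetricMeasure

lemma update_mem_cylinder (n : ℕ) (c : EulerPath) (j : Fin (n + 2)) :
    update c n j ∈ cylinder n c := fun _ hi => update_of_ne hi.ne _ _

lemma cylinder_eq_iUnion_update (n : ℕ) (c : EulerPath) :
    cylinder n c = ⋃ j : Fin (n + 2), cylinder (n + 1) (update c n j) := by
  ext x
  simp only [Set.mem_iUnion, cylinder, Set.mem_ofPred_eq, Nat.lt_succ_iff_lt_or_eq]
  constructor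
  · intro hx
    refine ⟨x n, fun i hi => ?_⟩
    rcases hi with hi | rfl
    · rw [update_of_ne hi.ne]; exact hx i hi
    · rw [update_self]
  · rintro ⟨j, hx⟩ i hi
    rw [hx i (.inl hi), update_of_ne hi.ne]

lemma pairwise_disjoint_cylinder_update (n : ℕ) (c : EulerPath) :
    Pairwise (Disjoint on fun j : Fin (n + 2) => cylinder (n + 1) (update c n j)) := by
  intro j j' hne
  refine Set.disjoint_left.mpr fun x hx hx' => hne ?_
  simpa using (hx n n.lt_succ_self).symm.trans (hx' n n.lt_succ_self)

lemma sum_turn_sign {n k : ℕ} (hk : k ≤ n) :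
    ∑ j : Fin (n + 2), (if (j : ℕ) ≤ k then (-1 : ℝ) else 1) = n - 2 * k := by
  obtain ⟨d, rfl⟩ := Nat.exists_eq_add_of_le hk
  rw [Fin.sum_univ_eq_sum_range (fun j => if j ≤ k then (-1 : ℝ) else 1),
    show k + d + 2 = (k + 1) + (d + 1) by ring, Finset.sum_range_add,
    Finset.sum_congr rfl fun j hj => if_pos (Nat.lt_succ_iff.mp (Finset.mem_range.mp hj)),
    Finset.sum_congr rfl fun j _ => if_neg (by omega : ¬k + 1 + j ≤ k)]
  simp only [Finset.sum_const, Finset.card_range, nsmul_eq_mul]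
  push_cast
  ring

lemma sum_u_succ_update_sq (n : ℕ) (c : EulerPath) :
    ∑ j : Fin (n + 2), u (n + 1) (update c n j) ^ 2 = n * u n c ^ 2 + n + 2 := by
  set ξ : Fin (n + 2) → ℝ := fun j => if (j : ℕ) ≤ kv c n then -1 else 1
  have hstep : ∀ j, u (n + 1) (update c n j) = u n c + ξ j := fun j => by
    have hj := update_mem_cylinder n c j
    rw [u_succ, u_eq_of_mem_cylinder hj, kv_eq_of_mem_cylinder hj, update_self]
  have hsq : ∀ j, (u n c + ξ j) ^ 2 = (u n c ^ 2 + 1) + 2 * u n c * ξ j := fun j => by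
    simp only [ξ]; split_ifs <;> ring
  simp only [hstep, hsq, Finset.sum_add_distrib, ← Finset.mul_sum, Finset.sum_const,
    Finset.card_univ, Fintype.card_fin, nsmul_eq_mul, ξ, sum_turn_sign (kv_le c n)]
  simp only [u]
  push_cast
  ring

lemma setIntegral_cylinder_u_succ_sq {η : Measure EulerPath} (hη : IsSymmetricMeasure η)
    (n : ℕ) (c : EulerPath) :
    ∫ x in cylinder n c, u (n + 1) x ^ 2 ∂η
      = ∫ x in cylinder n c, ((n : ℝ) / ((n : ℝ) + 2) * u n x ^ 2 + 1) ∂η := by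
  have := hη.1
  have hterm (j : Fin (n + 2)) := setIntegral_cylinder_of_forall_eq hη
    (c := update c n j) (f := fun x => u (n + 1) x ^ 2)
    fun x hx => by rw [u_eq_of_mem_cylinder hx]
  conv_lhs => rw [cylinder_eq_iUnion_update]
  rw [integral_iUnion_fintype (fun _ => measurableSet_cylinder _ _)
      (pairwise_disjoint_cylinder_update n c) fun _ => (integrable_u_sq η _).integrableOn,
    Finset.sum_congr rfl fun j _ => hterm j, ← Finset.mul_sum, sum_u_succ_update_sq,
    setIntegral_cylinder_of_forall_eq hη fun x hx => by rw [u_eq_of_mem_cylinder hx],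
    Finset.prod_range_succ]
  field_simp
  ring

end EulerPath

open EulerPath in
/-- `η`-almost everywhere, `E_η[u_{n+1}² | F_n] = (n/(n+2)) · u_n² + 1`. -/
theorem euler_u_sq_condexp
    (η : Measure EulerPath) (hη : IsSymmetricMeasure η) (n : ℕ) :
    MeasureTheory.condExp (coordAlg n) η (fun x => (u (n + 1) x) ^ 2) =ᵐ[η]
      fun x => ((n : ℝ) / ((n : ℝ) + 2)) * (u n x) ^ 2 + 1 := by
  have := hη.1
  have hg : StronglyMeasurable[coordAlg n] fun x => (n : ℝ) / ((n : ℝ) + 2) * u n x ^ 2 + 1 :=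
    (((measurable_u n).pow_const 2).const_mul _).add_const 1 |>.stronglyMeasurable
  have hgi : Integrable (fun x => (n : ℝ) / ((n : ℝ) + 2) * u n x ^ 2 + 1) η :=
    ((integrable_u_sq η n).const_mul _).add (integrable_const 1)
  rw [coordAlg_eq_comap] at hg ⊢
  refine (ae_eq_condExp_comap_of_forall_setIntegral_fiber_eq
    ((measurable_restrict n).mono (coordFil.le n) le_rfl)
    (integrable_u_sq η (n + 1)) hg hgi fun c => ?_).symm
  rw [restrict_preimage_singleton]
  exact (setIntegral_cylinder_u_succ_sq hη n c).symm
end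

section
/- The process S_n = (n+1)·u_n, n ≥ 0, is a mean-zero martingale with respect to the filtration (F_n) under the symmetric measure η; in particular ∫_X u_n dη = 0 for every n. -/
/-!
Fix the first `n` coordinates, so that the path sits at vertex `(n, k)` with `u_n = 2k - n`.
Under `η` the next coordinate is uniform on `Fin (n+2)`: `k + 1` of its values turn left
(`u_{n+1} = u_n - 1`) and `n + 1 - k` turn right (`u_{n+1} = u_n + 1`). Hence the conditional
mean of `u_{n+1}` is `u_n + (n - 2k)/(n + 2) = (n + 1)/(n + 2) · u_n`, i.e. `S_{n+1}` averages
to `S_n` over every length-`n` cylinder. The sets of `F_n` are finite unions of such cylinders,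
which gives the martingale property, and `S_0 = 0` gives the mean.
-/

open MeasureTheory Filter
open scoped ENNReal

theorem Fin.sum_ite_val_le {M : Type*} [AddCommMonoid M] {m k : ℕ} (hk : k < m) (a b : M) :
    ∑ j : Fin m, (if (j : ℕ) ≤ k then a else b) = (k + 1) • a + (m - (k + 1)) • b := by
  rw [Fin.sum_univ_eq_sum_range (fun i => if i ≤ k then a else b),
    ← Finset.sum_range_add_sum_Ico _ hk,
    Finset.sum_congr rfl fun i hi => if_pos (by simp at hi; omega),
    Finset.sum_congr rfl fun i hi => if_neg (by simp at hi; omega),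
    Finset.sum_const, Finset.sum_const, Finset.card_range, Nat.card_Ico]

section Fibres

variable {X α : Type*} [MeasurableSpace X] [MeasurableSpace α] [MeasurableSingletonClass α]
  {μ : Measure X} {f : X → α}

theorem setIntegral_preimage_singleton_comp (hf : Measurable f) (g : α → ℝ) (c : α) :
    ∫ x in f ⁻¹' {c}, g (f x) ∂μ = μ.real (f ⁻¹' {c}) * g c := by
  rw [setIntegral_congr_fun (hf (measurableSet_singleton c)) (g := fun _ => g c)
    (fun x hx => by rw [Set.mem_preimage.1 hx |> Set.eq_of_mem_singleton]),
    setIntegral_const, smul_eq_mul]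

theorem setIntegral_preimage_eq_of_forall_fibre [Finite α] (hf : Measurable f) {g h : X → ℝ}
    (hg : Integrable g μ) (hh : Integrable h μ)
    (hfibre : ∀ c, ∫ x in f ⁻¹' {c}, g x ∂μ = ∫ x in f ⁻¹' {c}, h x ∂μ) (t : Set α) :
    ∫ x in f ⁻¹' t, g x ∂μ = ∫ x in f ⁻¹' t, h x ∂μ := by
  classical
  have hunion : f ⁻¹' t = ⋃ c ∈ t.toFinite.toFinset, f ⁻¹' {c} := by
    ext; simp
  have hdisj : Set.PairwiseDisjoint (t.toFinite.toFinset : Set α) (fun c => f ⁻¹' {c}) :=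
    fun c _ c' _ hcc' => (Set.disjoint_singleton.2 hcc').preimage f
  have hmeas : ∀ c ∈ t.toFinite.toFinset, MeasurableSet (f ⁻¹' {c}) :=
    fun c _ => hf (measurableSet_singleton c)
  rw [hunion, integral_biUnion_finset _ hmeas hdisj fun _ _ => hg.integrableOn,
    integral_biUnion_finset _ hmeas hdisj fun _ _ => hh.integrableOn]
  exact Finset.sum_congr rfl fun c _ => hfibre c

end Fibres

abbrev EulerPrefix (n : ℕ) : Type := ∀ i : Fin n, Fin ((i : ℕ) + 2)

def truncate (n : ℕ) (x : EulerPath) : EulerPrefix n := fun i => x i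

theorem truncate_succ (n : ℕ) (x : EulerPath) :
    truncate (n + 1) x = Fin.snoc (truncate n x) (x n) := by
  funext i
  refine Fin.lastCases ?_ (fun i => ?_) i <;> simp [truncate]

theorem coordAlg_eq_comap_truncate (n : ℕ) :
    coordAlg n = MeasurableSpace.comap (truncate n) inferInstance := by
  simp only [coordAlg, MeasurableSpace.pi, MeasurableSpace.comap_iSup,
    MeasurableSpace.comap_comp]
  rfl

theorem measurable_truncate (n : ℕ) : Measurable (truncate n) :=
  measurable_pi_lambda _ fun _ => measurable_pi_apply _

theorem measurable_truncate_coordAlg (n : ℕ) : Measurable[coordAlg n] (truncate n) := by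
  rw [coordAlg_eq_comap_truncate]
  exact comap_measurable _

def kvPrefix : (n : ℕ) → EulerPrefix n → ℕ
  | 0, _ => 0
  | n + 1, c =>
    if (c (Fin.last n) : ℕ) ≤ kvPrefix n (Fin.init c) then kvPrefix n (Fin.init c)
    else kvPrefix n (Fin.init c) + 1

theorem kvPrefix_snoc (n : ℕ) (c : EulerPrefix n) (j : Fin (n + 2)) :
    kvPrefix (n + 1) (Fin.snoc c j) = if (j : ℕ) ≤ kvPrefix n c then kvPrefix n c
      else kvPrefix n c + 1 := by
  simp only [kvPrefix, Fin.init_snoc, Fin.snoc_last]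

theorem kv_eq_kvPrefix_truncate (x : EulerPath) : ∀ n, kv x n = kvPrefix n (truncate n x)
  | 0 => rfl
  | n + 1 => by rw [truncate_succ, kvPrefix_snoc, ← kv_eq_kvPrefix_truncate x n, kv]

theorem kvPrefix_le : ∀ (n : ℕ) (c : EulerPrefix n), kvPrefix n c ≤ n
  | 0, _ => le_rfl
  | n + 1, c => by
    have := kvPrefix_le n (Fin.init c)
    simp only [kvPrefix]
    split <;> omega

def uPrefix (n : ℕ) (c : EulerPrefix n) : ℝ := 2 * kvPrefix n c - n

theorem u_eq_uPrefix_truncate (n : ℕ) (x : EulerPath) : u n x = uPrefix n (truncate n x) := by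
  simp [u, uPrefix, kv_eq_kvPrefix_truncate]

theorem uPrefix_snoc (n : ℕ) (c : EulerPrefix n) (j : Fin (n + 2)) :
    uPrefix (n + 1) (Fin.snoc c j) = uPrefix n c + if (j : ℕ) ≤ kvPrefix n c then -1 else 1 := by
  simp only [uPrefix, kvPrefix_snoc]
  split <;> push_cast <;> ring

theorem abs_uPrefix_le (n : ℕ) (c : EulerPrefix n) : |uPrefix n c| ≤ n := by
  have := kvPrefix_le n c
  rw [uPrefix, abs_le]
  constructor <;> linarith [(Nat.cast_le (α := ℝ)).2 this, (kvPrefix n c).cast_nonneg (α := ℝ)]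

theorem measurable_u (n : ℕ) : Measurable[coordAlg n] (u n) := by
  rw [funext (u_eq_uPrefix_truncate n)]
  exact (measurable_of_countable (uPrefix n)).comp (measurable_truncate_coordAlg n)

theorem integrable_const_mul_u (η : Measure EulerPath) [IsFiniteMeasure η] (a : ℝ) (n : ℕ) :
    Integrable (fun x => a * u n x) η := by
  have hbound : ∀ x, ‖u n x‖ ≤ n := fun x => by
    rw [Real.norm_eq_abs, u_eq_uPrefix_truncate]
    exact abs_uPrefix_le n _
  exact (Integrable.of_bound ((measurable_u n).mono (coordFil.le n) le_rfl).aestronglyMeasurable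
    n (ae_of_all _ hbound)).const_mul a

theorem sum_uPrefix_snoc (n : ℕ) (c : EulerPrefix n) :
    ∑ j : Fin (n + 2), uPrefix (n + 1) (Fin.snoc c j) = (n + 1) * uPrefix n c := by
  have hk := kvPrefix_le n c
  simp only [uPrefix_snoc, Finset.sum_add_distrib, Finset.sum_const, Finset.card_univ,
    Fintype.card_fin, Fin.sum_ite_val_le (by omega : kvPrefix n c < n + 2), nsmul_eq_mul]
  simp only [uPrefix]
  rw [Nat.cast_sub (by omega)]
  push_cast
  ring

theorem truncate_preimage_eq_iUnion_snoc (n : ℕ) (c : EulerPrefix n) :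
    truncate n ⁻¹' {c} = ⋃ j : Fin (n + 2), truncate (n + 1) ⁻¹' {Fin.snoc c j} := by
  ext x
  simp [truncate_succ, Fin.snoc_inj]

theorem measure_truncate_preimage {η : Measure EulerPath} (hη : IsSymmetricMeasure η) (n : ℕ)
    (c : EulerPrefix n) :
    η (truncate n ⁻¹' {c}) = ∏ i ∈ Finset.range n, ((i : ℝ≥0∞) + 2)⁻¹ := by
  convert hη.2 n (fun i => if h : i < n then c ⟨i, h⟩ else 0) using 2
  ext x
  simp +contextual [truncate, funext_iff, Fin.forall_iff]

theorem measureReal_truncate_preimage_snoc {η : Measure EulerPath} (hη : IsSymmetricMeasure η)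
    (n : ℕ) (c : EulerPrefix n) (j : Fin (n + 2)) :
    η.real (truncate (n + 1) ⁻¹' {Fin.snoc c j}) = η.real (truncate n ⁻¹' {c}) / (n + 2) := by
  simp only [measureReal_def, measure_truncate_preimage hη, Finset.prod_range_succ,
    ENNReal.toReal_mul, ENNReal.toReal_inv, div_eq_mul_inv]
  norm_num [ENNReal.toReal_add]

theorem setIntegral_truncate_preimage_succ {η : Measure EulerPath} (hη : IsSymmetricMeasure η)
    (n : ℕ) (c : EulerPrefix n) :
    ∫ x in truncate n ⁻¹' {c}, ((n : ℝ) + 1) * u n x ∂η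
      = ∫ x in truncate n ⁻¹' {c}, (((n + 1 : ℕ) : ℝ) + 1) * u (n + 1) x ∂η := by
  have : IsProbabilityMeasure η := hη.1
  have hsnoc_disj : Pairwise
      (Function.onFun Disjoint fun j : Fin (n + 2) => truncate (n + 1) ⁻¹' {Fin.snoc c j}) :=
    fun j j' hjj' => (Set.disjoint_singleton.2 fun h => hjj' (Fin.snoc_injective2 h).2).preimage _
  have hfibre : ∀ j : Fin (n + 2), ∫ x in truncate (n + 1) ⁻¹' {Fin.snoc c j},
      (((n + 1 : ℕ) : ℝ) + 1) * uPrefix (n + 1) (truncate (n + 1) x) ∂η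
        = η.real (truncate n ⁻¹' {c}) * uPrefix (n + 1) (Fin.snoc c j) := fun j => by
    rw [setIntegral_preimage_singleton_comp (measurable_truncate _)
      (fun c => (((n + 1 : ℕ) : ℝ) + 1) * uPrefix (n + 1) c),
      measureReal_truncate_preimage_snoc hη]
    push_cast
    field_simp
    ring
  conv_rhs => rw [truncate_preimage_eq_iUnion_snoc]
  rw [integral_iUnion_fintype (fun j => measurable_truncate _ (measurableSet_singleton _))
      hsnoc_disj fun _ => (integrable_const_mul_u η _ _).integrableOn]
  simp only [u_eq_uPrefix_truncate]
  rw [setIntegral_preimage_singleton_comp (measurable_truncate n)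
    (fun c => ((n : ℝ) + 1) * uPrefix n c), Finset.sum_congr rfl fun j _ => hfibre j,
    ← Finset.mul_sum, sum_uPrefix_snoc]

theorem setIntegral_succ_eq_of_measurableSet_coordAlg {η : Measure EulerPath}
    (hη : IsSymmetricMeasure η) (n : ℕ) {s : Set EulerPath} (hs : MeasurableSet[coordAlg n] s) :
    ∫ x in s, ((n : ℝ) + 1) * u n x ∂η = ∫ x in s, (((n + 1 : ℕ) : ℝ) + 1) * u (n + 1) x ∂η := by
  have : IsProbabilityMeasure η := hη.1
  rw [coordAlg_eq_comap_truncate] at hs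
  obtain ⟨t, -, rfl⟩ := hs
  exact setIntegral_preimage_eq_of_forall_fibre (measurable_truncate n)
    (integrable_const_mul_u η _ _) (integrable_const_mul_u η _ _)
    (setIntegral_truncate_preimage_succ hη n) t

/-- The process `S_n = (n+1) u_n` is a mean-zero martingale with respect to `(F_n)`
under the symmetric measure `η`; in particular `∫ u_n dη = 0` for every `n`. -/
theorem euler_S_martingale
    (η : Measure EulerPath) (hη : IsSymmetricMeasure η) :
    Martingale (fun (n : ℕ) (x : EulerPath) => ((n : ℝ) + 1) * u n x) coordFil η ∧
      (∀ n : ℕ, ∫ x, ((n : ℝ) + 1) * u n x ∂η = 0) ∧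
      (∀ n : ℕ, ∫ x, u n x ∂η = 0) := by
  have : IsProbabilityMeasure η := hη.1
  have hmart : Martingale (fun (n : ℕ) (x : EulerPath) => ((n : ℝ) + 1) * u n x) coordFil η :=
    martingale_of_setIntegral_eq_succ (fun n => ((measurable_u n).const_mul _).stronglyMeasurable)
      (fun n => integrable_const_mul_u η _ n)
      fun n _ => setIntegral_succ_eq_of_measurableSet_coordAlg hη n
  have hmean (n : ℕ) : ∫ x, ((n : ℝ) + 1) * u n x ∂η = 0 := by
    simpa [u, kv] using (hmart.setIntegral_eq n.zero_le (MeasurableSet.univ (m := coordFil 0))).symm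
  refine ⟨hmart, hmean, fun n => ?_⟩
  have h := hmean n
  rwa [integral_const_mul, mul_eq_zero, or_iff_right (by positivity)] at h
end
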